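/- Under the SL(2,ℤ) part of the extended affine Jacobi group action, γ(u, v, τ) = (u + c⟨v,v⟩/(2(cτ+d)), v/(cτ+d), (aτ+b)/(cτ+d)) with ad - bc = 1, the metric g = Σ_{i,j} g_{ij} dv_i dv_j + 2 du dτ transforms conformally: the pullback of g equals g/(cτ+d)². -/
import Mathlib


open scoped BigOperators

/-- Conformal transformation of the metric `g = ∑ g_{ij} dv_i dv_j + 2 du dτ` under the
`SL(2,ℤ)`-action `γ(u,v,τ) = (u + c⟨v,v⟩/(2(cτ+d)), v/(cτ+d), (aτ+b)/(cτ+d))` with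
`ad - bc = 1`: the pullback of `g` equals `g/(cτ+d)²`.  The differentials transform as
`dv_i ↦ dv_i/D - c v_i dτ/D²`, `dτ ↦ ((aD - c(aτ+b))/D²) dτ`,
`du ↦ du + c⟨v,dv⟩/D - c²⟨v,v⟩dτ/(2D²)`, where `D = cτ + d`. -/
theorem stmt12 (n : ℕ) (g : Matrix (Fin (n + 1)) (Fin (n + 1)) ℂ) (hgs : g.IsSymm)
    (a b c d : ℤ) (had : a * d - b * c = 1) (τ : ℂ)
    (hden : (c : ℂ) * τ + (d : ℂ) ≠ 0)
    (v dv : Fin (n + 1) → ℂ) (u du dτ : ℂ) :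
    let D : ℂ := (c : ℂ) * τ + (d : ℂ)
    let dv' : Fin (n + 1) → ℂ := fun i => dv i / D - (c : ℂ) * v i * dτ / D ^ 2
    let dτ' : ℂ := (((a : ℂ) * D - (c : ℂ) * ((a : ℂ) * τ + (b : ℂ))) / D ^ 2) * dτ
    let du' : ℂ := du + (c : ℂ) * (∑ i, ∑ j, g i j * v i * dv j) / D
        - (c : ℂ) ^ 2 * (∑ i, ∑ j, g i j * v i * v j) * dτ / (2 * D ^ 2)
    (∑ i, ∑ j, g i j * dv' i * dv' j) + 2 * du' * dτ'
      = ((∑ i, ∑ j, g i j * dv i * dv j) + 2 * du * dτ) / D ^ 2 := by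
  intro D dv' dτ' du'
  have hD : D ≠ 0 := hden
  have hD1 : (a : ℂ) * D - (c : ℂ) * ((a : ℂ) * τ + (b : ℂ)) = 1 := by
    have h : ((a * d - b * c : ℤ) : ℂ) = 1 := by rw [had]; norm_num
    push_cast at h
    simp only [D]
    linear_combination h
  simp only [dv', dτ', du']
  clear_value D
  have hsym : ∀ i j, g i j = g j i := fun i j => (Matrix.IsSymm.apply hgs i j).symm
  have key : (∑ i, ∑ j, g i j * v i * dv j) = ∑ i, ∑ j, g i j * dv i * v j := by
    rw [Finset.sum_comm]
    exact Finset.sum_congr rfl fun i _ => Finset.sum_congr rfl fun j _ => by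
      rw [hsym j i]; ring
  have h1 : (∑ i, ∑ j, g i j * ((dv i / D - (c : ℂ) * v i * dτ / D ^ 2))
        * ((dv j / D - (c : ℂ) * v j * dτ / D ^ 2)))
      = (∑ i, ∑ j, g i j * dv i * dv j) / D ^ 2
        - (∑ i, ∑ j, g i j * dv i * v j) * ((c : ℂ) * dτ) / D ^ 3
        - (∑ i, ∑ j, g i j * v i * dv j) * ((c : ℂ) * dτ) / D ^ 3
        + (∑ i, ∑ j, g i j * v i * v j) * ((c : ℂ) ^ 2 * dτ ^ 2) / D ^ 4 := by
    simp only [Finset.sum_div, Finset.sum_mul, ← Finset.sum_sub_distrib,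
      ← Finset.sum_add_distrib]
    refine Finset.sum_congr rfl fun i _ => Finset.sum_congr rfl fun j _ => ?_
    field_simp [hD]
    ring
  rw [h1, key, hD1]
  ring
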